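/- arXiv:cs/0612089 — 2 statements merged into one kernel-verified Lean document; each statement's English description precedes it below -/
import Mathlib

section
/- There exists a 2-tag system T over the alphabet {x, ẋ, x̄₁, ẋ̄₁, x̄₂ : x ∈ {0,1}} with 6 rules such that for any input word w = x̄₀ẋ̄₀x₁x₂…x_l (encoding a barred leading pair followed by l plain symbols), after exactly ⌊|w|/2⌋ + 1 computation steps the remaining dataword is a single symbol of the form ẋ̄₁ (a dotted barred symbol) if |w| is odd, and a single symbol of the form x̄₂ if |w| is even. That is, T decides the parity of |w| in ⌊|w|/2⌋ + 1 steps. -/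
/-
The first step moves the barred pair to the end as the suffix x̄₁ẋ̄₁ (with x = x₀). Each of the
next ⌊l/2⌋ steps deletes two plain symbols, so at most one plain symbol remains in front of that
suffix. If one remains (|w| odd), the last step deletes it together with x̄₁ and leaves ẋ̄₁; if
none remains (|w| even), the last step rewrites x̄₁ẋ̄₁ to x̄₂.
-/

/-- Alphabet of the parity-testing 2-tag system: for each binary value we have
a barred symbol x̄, a dotted barred symbol ẋ̄, plain x, dotted ẋ, and the
auxiliary symbols x̄₁, ẋ̄₁ and x̄₂. -/
inductive PSym : Type
  | bar : Bool → PSym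
  | dotbar : Bool → PSym
  | plain : Bool → PSym
  | dot : Bool → PSym
  | bar1 : Bool → PSym
  | dotbar1 : Bool → PSym
  | bar2 : Bool → PSym
  deriving DecidableEq

open PSym

/-- The six rules x̄ → x̄₁ẋ̄₁, x → ε, x̄₁ → x̄₂ (for x ∈ {0,1}); all other
symbols have no rule. -/
def PRule : PSym → Option (List PSym)
  | bar x => some [bar1 x, dotbar1 x]
  | plain _ => some []
  | bar1 x => some [bar2 x]
  | _ => none

/-- One (partial) 2-tag computation step: delete the two leftmost symbols and
append the rule for the first of them; undefined if there is no such rule or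
fewer than two symbols. -/
def pStep : List PSym → Option (List PSym)
  | a :: _ :: t => (PRule a).map (fun α => t ++ α)
  | _ => none

/-- Iterated partial steps. -/
def pIter : ℕ → List PSym → Option (List PSym)
  | 0, w => some w
  | n + 1, w => pStep w >>= pIter n

theorem pIter_add (m n : ℕ) (w : List PSym) :
    pIter (m + n) w = pIter m w >>= pIter n := by
  induction m generalizing w with
  | zero => rw [Nat.zero_add]; rfl
  | succ k ih =>
    rw [Nat.add_right_comm]
    show pStep w >>= pIter (k + n) = (pStep w >>= pIter k) >>= pIter n
    cases pStep w with
    | none => rfl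
    | some w' => exact ih w'

theorem pIter_one (w : List PSym) : pIter 1 w = pStep w := by
  show pStep w >>= pIter 0 = pStep w
  cases pStep w <;> rfl

theorem pIter_map_plain_append (k : ℕ) (ys : List Bool) (rest : List PSym)
    (hk : 2 * k ≤ ys.length) :
    pIter k (ys.map plain ++ rest) = some ((ys.drop (2 * k)).map plain ++ rest) := by
  induction k generalizing ys with
  | zero => rfl
  | succ k ih =>
    obtain _ | ⟨a, _ | ⟨b, t⟩⟩ := ys
    · simp at hk
    · simp at hk; omega
    · have ht : 2 * k ≤ t.length := by simp at hk; omega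
      show pStep (plain a :: plain b :: (t.map plain ++ rest)) >>= pIter k = _
      simp only [pStep, PRule, Option.map_some, List.append_nil, Nat.mul_succ, List.drop_succ_cons]
      exact ih t ht

theorem pIter_parity_run (x0 : Bool) (xs : List Bool) :
    pIter (xs.length / 2 + 2) (bar x0 :: dotbar x0 :: xs.map plain) =
      pStep ((xs.drop (2 * (xs.length / 2))).map plain ++ [bar1 x0, dotbar1 x0]) := by
  rw [show xs.length / 2 + 2 = 1 + (xs.length / 2 + 1) by omega, pIter_add, pIter_one]
  change pIter (xs.length / 2 + 1) (xs.map plain ++ [bar1 x0, dotbar1 x0]) = _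
  rw [pIter_add, pIter_map_plain_append _ _ _ (Nat.mul_div_le _ _)]
  exact pIter_one _

/-- The 2-tag system with the six rules `PRule` decides the parity of the
length of an input word w = x̄₀ẋ̄₀x₁…x_l in exactly ⌊|w|/2⌋ + 1 steps: the
remaining dataword is a single dotted barred symbol ẋ̄₁ if |w| is odd, and a
single symbol x̄₂ if |w| is even. -/
theorem stmt2 (x0 : Bool) (xs : List Bool) :
    let w : List PSym := bar x0 :: dotbar x0 :: xs.map plain
    (Odd w.length → ∃ y, pIter (w.length / 2 + 1) w = some [dotbar1 y]) ∧
    (Even w.length → ∃ y, pIter (w.length / 2 + 1) w = some [bar2 y]) := by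
  intro w
  have hsteps : w.length / 2 + 1 = xs.length / 2 + 2 := by simp [w]; omega
  simp only [hsteps, w, pIter_parity_run]
  refine ⟨fun hodd => ⟨x0, ?_⟩, fun heven => ⟨x0, ?_⟩⟩
  · have hleft : (xs.drop (2 * (xs.length / 2))).length = 1 := by
      simp only [List.length_cons, List.length_map, Nat.odd_iff] at hodd
      rw [List.length_drop]
      omega
    obtain ⟨c, hc⟩ := List.length_eq_one_iff.mp hleft
    rw [hc]
    rfl
  · have hleft : xs.drop (2 * (xs.length / 2)) = [] := by
      simp only [List.length_cons, List.length_map, Nat.even_iff] at heven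
      rw [List.drop_eq_nil_iff]
      omega
    rw [hleft]
    rfl
end

section
/- For all natural numbers l ≥ 0 and 0 ≤ c ≤ 2^⌈log₂(l+1)⌉: if l + c < 2^⌈log₂(l+1)⌉ then 2^⌈log₂(l+c+1)⌉ = 2^⌈log₂(l+1)⌉, and if l + c ≥ 2^⌈log₂(l+1)⌉ then 2^⌈log₂(l+c+1)⌉ = 2·2^⌈log₂(l+1)⌉. In other words, after appending a word of length c ≤ counter value, the counter invariant (counter = least power of two exceeding dataword length) is restored either by keeping the counter or doubling it exactly once. -/
/-! Write `k = ⌈log₂(l+1)⌉`, so `l + 1 ≤ 2^k`; since `c ≤ 2^k`, also `l + c + 1 ≤ 2^(k+1)`.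
Hence `⌈log₂(l+c+1)⌉` is `k` when `l + c + 1 ≤ 2^k` and `k + 1` otherwise. -/

namespace Nat

theorem clog_eq_clog_of_le_of_le_pow_clog {b n m : ℕ} (hb : 1 < b) (hnm : n ≤ m)
    (hm : m ≤ b ^ clog b n) : clog b m = clog b n :=
  le_antisymm ((clog_le_iff_le_pow hb).mpr hm) (clog_mono_right b hnm)

theorem clog_eq_succ_of_pow_lt_of_le_pow_succ {b n k : ℕ} (hb : 1 < b) (hlt : b ^ k < n)
    (hle : n ≤ b ^ (k + 1)) : clog b n = k + 1 :=
  le_antisymm ((clog_le_iff_le_pow hb).mpr hle) ((lt_clog_iff_pow_lt hb).mpr hlt)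

end Nat

/-- Restoring the counter invariant after an append of length c ≤ counter:
if l + c < 2^⌈log₂(l+1)⌉ the counter is unchanged, and otherwise it doubles:
2^⌈log₂(l+c+1)⌉ = 2·2^⌈log₂(l+1)⌉. -/
theorem stmt10 (l c : ℕ) (hc : c ≤ 2 ^ Nat.clog 2 (l + 1)) :
    (l + c < 2 ^ Nat.clog 2 (l + 1) →
      2 ^ Nat.clog 2 (l + c + 1) = 2 ^ Nat.clog 2 (l + 1)) ∧
    (2 ^ Nat.clog 2 (l + 1) ≤ l + c →
      2 ^ Nat.clog 2 (l + c + 1) = 2 * 2 ^ Nat.clog 2 (l + 1)) := by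
  refine ⟨fun h => ?_, fun h => ?_⟩
  · rw [Nat.clog_eq_clog_of_le_of_le_pow_clog one_lt_two (by omega) h]
  · have hl : l + 1 ≤ 2 ^ Nat.clog 2 (l + 1) := Nat.le_pow_clog one_lt_two _
    rw [Nat.clog_eq_succ_of_pow_lt_of_le_pow_succ (k := Nat.clog 2 (l + 1)) one_lt_two
      (by omega) (by rw [pow_succ]; omega), pow_succ, mul_comm]
end
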